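/- Let ρ be a positive-definite density matrix on ℂ^d with spectral decomposition ρ = Σ_n λ_n u_n u_nᴴ, let β ∈ ℝ, K a finite index set, ω : K → ℝ, and L : K → M_d(ℂ). Assume there is an involution σ : K → K (σ∘σ = id) with ω_{σ(k)} = −ω_k and L_{σ(k)} = e^{−β ω_k/2}·L_kᴴ for all k. Then for every Hermitian d×d matrix X with X² = I and Xρ = ρX, (1/2)·Σ_{k∈K} e^{−β ω_k/2}·⟨[L_kᴴ, X], S_{ρ, β ω_k}([L_kᴴ, X])⟩ ≤ 2·Σ_{k∈K} Re Tr(ρ L_kᴴ L_k), where the left-hand side is a nonnegative real number. -/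

import Mathlib

open Matrix
open scoped ComplexOrder

/-- The logarithmic mean of two reals: `Φ(x,y) = (x−y)/(ln x − ln y)` for `x ≠ y`, `Φ(x,x) = x`. -/
noncomputable def logMean (x y : ℝ) : ℝ :=
  if x = y then x else (x - y) / (Real.log x - Real.log y)

/-- The tilted operator `S_{φ,θ}` associated with the spectral data `(lam, u)` of `φ`:
`S_{φ,θ}(X) = Σ_{n,m} Φ(e^{θ/2} λ_n, e^{−θ/2} λ_m) (u_nᴴ X u_m) u_n u_mᴴ`. -/
noncomputable def tilted {d : ℕ} (lam : Fin d → ℝ) (u : Fin d → Fin d → ℂ) (θ : ℝ)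
    (X : Matrix (Fin d) (Fin d) ℂ) : Matrix (Fin d) (Fin d) ℂ :=
  ∑ n : Fin d, ∑ m : Fin d,
    ((logMean (Real.exp (θ / 2) * lam n) (Real.exp (-θ / 2) * lam m) : ℝ) : ℂ) •
      ((star (u n) ⬝ᵥ (X *ᵥ u m)) • Matrix.vecMulVec (u n) (star (u m)))

lemma aux_log (t : ℝ) (ht : 1 ≤ t) : 2*(t-1) ≤ (t+1) * Real.log t := by
  have hmono : MonotoneOn (fun s : ℝ => (s+1) * Real.log s - 2*(s-1)) (Set.Ici 1) := by
    have hderiv : ∀ s ∈ interior (Set.Ici (1:ℝ)),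
        HasDerivAt (fun s : ℝ => (s+1) * Real.log s - 2*(s-1))
          (Real.log s + (s+1) * s⁻¹ - 2) s := by
      intro s hs
      rw [interior_Ici, Set.mem_Ioi] at hs
      have hs0 : s ≠ 0 := by linarith
      have h1 : HasDerivAt (fun s : ℝ => (s+1) * Real.log s)
          (1 * Real.log s + (s+1) * s⁻¹) s := by
        exact ((hasDerivAt_id s).add_const 1).mul (Real.hasDerivAt_log hs0)
      have h2 : HasDerivAt (fun s : ℝ => 2*(s-1)) 2 s := by
        simpa using ((hasDerivAt_id s).sub_const 1).const_mul 2
      have h3 := h1.sub h2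
      simp only [one_mul] at h3
      exact h3
    apply monotoneOn_of_deriv_nonneg (convex_Ici 1)
    · apply ContinuousOn.sub
      · exact (continuous_id.add continuous_const).continuousOn.mul
          (Real.continuousOn_log.mono (by intro x hx; simp at hx ⊢; intro h; linarith))
      · fun_prop
    · intro s hs
      exact (hderiv s hs).differentiableAt.differentiableWithinAt
    · intro s hs
      rw [(hderiv s hs).deriv]
      rw [interior_Ici, Set.mem_Ioi] at hs
      have hs0 : (0:ℝ) < s := by linarith
      have hlog : 1 - s⁻¹ ≤ Real.log s := by
        have := Real.log_le_sub_one_of_pos (x := s⁻¹) (by positivity)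
        rw [Real.log_inv] at this
        linarith
      have : (s+1) * s⁻¹ = 1 + s⁻¹ := by field_simp
      rw [this]; linarith
  have h0 : (fun s : ℝ => (s+1) * Real.log s - 2*(s-1)) 1 ≤
      (fun s : ℝ => (s+1) * Real.log s - 2*(s-1)) t :=
    hmono (Set.mem_Ici.mpr le_rfl) (Set.mem_Ici.mpr ht) ht
  simp only [Real.log_one] at h0
  linarith [h0]

lemma logMean_symm (x y : ℝ) : logMean x y = logMean y x := by
  unfold logMean
  rcases eq_or_ne x y with h | h
  · simp [h]
  · rw [if_neg h, if_neg (Ne.symm h), ← neg_sub x y, ← neg_sub (Real.log x), neg_div_neg_eq]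

lemma logMean_pos {x y : ℝ} (hx : 0 < x) (hy : 0 < y) : 0 < logMean x y := by
  have key : ∀ a b : ℝ, 0 < b → b < a → 0 < logMean a b := by
    intro a b hb hba
    unfold logMean
    rw [if_neg (by linarith)]
    apply div_pos (by linarith)
    have := Real.log_lt_log hb hba
    linarith
  rcases lt_trichotomy x y with h | h | h
  · rw [logMean_symm]; exact key y x hx h
  · unfold logMean; simp [h]; linarith
  · exact key x y hy h

lemma logMean_le_arith {x y : ℝ} (hx : 0 < x) (hy : 0 < y) :
    logMean x y ≤ (x + y) / 2 := by
  have key : ∀ a b : ℝ, 0 < b → b < a → logMean a b ≤ (a + b) / 2 := by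
    intro a b hb hba
    have ha : 0 < a := lt_trans hb hba
    unfold logMean
    rw [if_neg (by linarith)]
    have hlogpos : 0 < Real.log a - Real.log b := by
      have := Real.log_lt_log hb hba; linarith
    rw [div_le_iff₀ hlogpos]
    have ht : 1 ≤ a / b := (one_le_div hb).mpr (le_of_lt hba)
    have := aux_log (a/b) ht
    have hlogdiv : Real.log (a/b) = Real.log a - Real.log b :=
      Real.log_div (ne_of_gt ha) (ne_of_gt hb)
    rw [hlogdiv] at this
    have hb' : (0:ℝ) < b := hb
    have expand : b * (2 * (a/b - 1)) ≤ b * ((a/b + 1) * (Real.log a - Real.log b)) :=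
      mul_le_mul_of_nonneg_left this (le_of_lt hb)
    have e1 : b * (2 * (a/b - 1)) = 2*(a - b) := by field_simp
    have e2 : b * ((a/b + 1) * (Real.log a - Real.log b))
        = (a + b) * (Real.log a - Real.log b) := by field_simp
    rw [e1, e2] at expand
    linarith
  rcases lt_trichotomy x y with h | h | h
  · rw [logMean_symm]; have := key y x hx h; linarith
  · unfold logMean; simp [h]
  · exact key x y hy h

variable {d : ℕ}

lemma trace_aux (A : Matrix (Fin d) (Fin d) ℂ) (v w : Fin d → ℂ) :
    (Aᴴ * vecMulVec v (star w)).trace = star (star v ⬝ᵥ (A *ᵥ w)) := by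
  simp only [trace, diag_apply, Matrix.mul_apply, conjTranspose_apply, vecMulVec_apply,
    dotProduct, mulVec, star_sum, star_mul', star_star, Pi.star_apply, Finset.mul_sum]
  rw [Finset.sum_comm]
  exact Finset.sum_congr rfl fun i _ => Finset.sum_congr rfl fun j _ => by ring

lemma conj_entry (u : Fin d → Fin d → ℂ) (A : Matrix (Fin d) (Fin d) ℂ) (n m : Fin d) :
    ((Matrix.of fun i p => u p i)ᴴ * A * (Matrix.of fun i p => u p i)) n m
      = star (u n) ⬝ᵥ (A *ᵥ u m) := by
  simp only [Matrix.mul_apply, conjTranspose_apply, Matrix.of_apply, dotProduct, mulVec,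
    Pi.star_apply, Finset.sum_mul, Finset.mul_sum]
  rw [Finset.sum_comm]
  exact Finset.sum_congr rfl fun i _ => Finset.sum_congr rfl fun j _ => by ring

lemma c_conjT (u : Fin d → Fin d → ℂ) (A : Matrix (Fin d) (Fin d) ℂ) (n m : Fin d) :
    star (u n) ⬝ᵥ (Aᴴ *ᵥ u m) = star (star (u m) ⬝ᵥ (A *ᵥ u n)) := by
  simp only [dotProduct, mulVec, conjTranspose_apply, star_sum, star_mul', star_star,
    Pi.star_apply, Finset.mul_sum]
  rw [Finset.sum_comm]
  exact Finset.sum_congr rfl fun i _ => Finset.sum_congr rfl fun j _ => by ring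

lemma key1 (lam : Fin d → ℝ) (u : Fin d → Fin d → ℂ) (θ : ℝ) (A : Matrix (Fin d) (Fin d) ℂ) :
    (Aᴴ * tilted lam u θ A).trace =
      ((∑ n, ∑ m, logMean (Real.exp (θ / 2) * lam n) (Real.exp (-θ / 2) * lam m) *
        Complex.normSq (star (u n) ⬝ᵥ (A *ᵥ u m)) : ℝ) : ℂ) := by
  unfold tilted
  rw [Matrix.mul_sum, trace_sum]
  push_cast
  refine Finset.sum_congr rfl fun n _ => ?_
  rw [Matrix.mul_sum, trace_sum]
  refine Finset.sum_congr rfl fun m _ => ?_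
  rw [Matrix.mul_smul, Matrix.mul_smul, trace_smul, trace_smul, trace_aux, smul_eq_mul,
    smul_eq_mul, Complex.star_def, Complex.mul_conj]

lemma key2 (lam : Fin d → ℝ) (u : Fin d → Fin d → ℂ)
    (horth : ∀ n m, star (u n) ⬝ᵥ u m = if n = m then 1 else 0)
    (M : Matrix (Fin d) (Fin d) ℂ) :
    ((∑ n : Fin d, (lam n : ℂ) • vecMulVec (u n) (star (u n))) * (M * Mᴴ)).trace =
      ((∑ n, ∑ m, lam n * Complex.normSq (star (u n) ⬝ᵥ (M *ᵥ u m)) : ℝ) : ℂ) := by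
  set V : Matrix (Fin d) (Fin d) ℂ := Matrix.of fun i p => u p i with hV
  have hVV : Vᴴ * V = 1 := by
    ext n m
    simp only [Matrix.mul_apply, conjTranspose_apply, Matrix.of_apply, hV, Matrix.one_apply]
    have := horth n m
    simpa [dotProduct] using this
  have hVV' : V * Vᴴ = 1 := mul_eq_one_comm.mp hVV
  have hρ' : (∑ n : Fin d, (lam n : ℂ) • vecMulVec (u n) (star (u n)))
      = V * Matrix.diagonal (fun n => (lam n : ℂ)) * Vᴴ := by
    ext i j
    simp only [Matrix.sum_apply, Matrix.smul_apply, vecMulVec_apply, Pi.star_apply,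
      Matrix.mul_apply, Matrix.diagonal_apply, conjTranspose_apply, Matrix.of_apply, hV,
      Finset.sum_mul, smul_eq_mul]
    rw [Finset.sum_comm]
    refine Finset.sum_congr rfl fun n _ => ?_
    simp [Finset.sum_ite_eq', Finset.mul_sum]
    ring
  rw [hρ']
  set W : Matrix (Fin d) (Fin d) ℂ := Vᴴ * M * V with hW
  have hWH : Wᴴ = Vᴴ * (Mᴴ * V) := by
    rw [hW, conjTranspose_mul, conjTranspose_mul, conjTranspose_conjTranspose]
  have hWW : W * Wᴴ = Vᴴ * ((M * Mᴴ) * V) := by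
    rw [hW, hWH]
    simp only [Matrix.mul_assoc]
    rw [← Matrix.mul_assoc V Vᴴ, hVV', Matrix.one_mul]
  have hins : V * Matrix.diagonal (fun n => (lam n : ℂ)) * Vᴴ * (M * Mᴴ)
      = V * (Matrix.diagonal (fun n => (lam n : ℂ)) * (W * Wᴴ)) * Vᴴ := by
    rw [hWW]
    simp only [Matrix.mul_assoc]
    rw [hVV', Matrix.mul_one]
  rw [hins, Matrix.trace_mul_cycle, ← Matrix.mul_assoc, hVV, Matrix.one_mul]
  have hWent : ∀ n m, W n m = star (u n) ⬝ᵥ (M *ᵥ u m) := fun n m => conj_entry u M n m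
  have : (Matrix.diagonal (fun n => (lam n : ℂ)) * (W * Wᴴ)).trace
      = ∑ n, ∑ m, (lam n : ℂ) * (W n m * star (W n m)) := by
    simp only [trace, diag_apply, Matrix.mul_apply, conjTranspose_apply, Finset.mul_sum,
      Matrix.diagonal_apply, ite_mul, zero_mul, Finset.sum_ite_irrel, Finset.sum_const_zero,
      Finset.sum_ite_eq, Finset.mem_univ, if_true]
  rw [this]
  push_cast
  refine Finset.sum_congr rfl fun n _ => Finset.sum_congr rfl fun m _ => ?_
  rw [hWent, Complex.star_def, Complex.mul_conj]

lemma normSq_sub_le (a b : ℂ) :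
    Complex.normSq (a - b) ≤ 2 * Complex.normSq a + 2 * Complex.normSq b := by
  simp only [Complex.normSq_apply, Complex.sub_re, Complex.sub_im]
  nlinarith [sq_nonneg (a.re + b.re), sq_nonneg (a.im + b.im)]

theorem stmt14 (d : ℕ) (lam : Fin d → ℝ) (u : Fin d → Fin d → ℂ)
    (hpos : ∀ n, 0 < lam n)
    (horth : ∀ n m, star (u n) ⬝ᵥ u m = if n = m then 1 else 0)
    (ρ : Matrix (Fin d) (Fin d) ℂ)
    (hρ : ρ = ∑ n : Fin d, (lam n : ℂ) • Matrix.vecMulVec (u n) (star (u n)))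
    (htr : ρ.trace = 1)
    (β : ℝ) (K : Type*) [Fintype K] (ω : K → ℝ) (L : K → Matrix (Fin d) (Fin d) ℂ)
    (σ : K → K) (hσ : ∀ k, σ (σ k) = k) (hω : ∀ k, ω (σ k) = -ω k)
    (hLσ : ∀ k, L (σ k) = ((Real.exp (-(β * ω k) / 2) : ℝ) : ℂ) • (L k)ᴴ)
    (X : Matrix (Fin d) (Fin d) ℂ) (hX : Xᴴ = X) (hX2 : X * X = 1)
    (hcomm : X * ρ = ρ * X) :
    ((2 : ℂ)⁻¹ * ∑ k : K, ((Real.exp (-(β * ω k) / 2) : ℝ) : ℂ) *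
        ((((L k)ᴴ * X - X * (L k)ᴴ)ᴴ *
          tilted lam u (β * ω k) ((L k)ᴴ * X - X * (L k)ᴴ)).trace)).im = 0 ∧
    0 ≤ ((2 : ℂ)⁻¹ * ∑ k : K, ((Real.exp (-(β * ω k) / 2) : ℝ) : ℂ) *
        ((((L k)ᴴ * X - X * (L k)ᴴ)ᴴ *
          tilted lam u (β * ω k) ((L k)ᴴ * X - X * (L k)ᴴ)).trace)).re ∧
    ((2 : ℂ)⁻¹ * ∑ k : K, ((Real.exp (-(β * ω k) / 2) : ℝ) : ℂ) *
        ((((L k)ᴴ * X - X * (L k)ᴴ)ᴴ *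
          tilted lam u (β * ω k) ((L k)ᴴ * X - X * (L k)ᴴ)).trace)).re ≤
      2 * ∑ k : K, ((ρ * ((L k)ᴴ * L k)).trace).re := by

  set A : K → Matrix (Fin d) (Fin d) ℂ := fun k => (L k)ᴴ * X - X * (L k)ᴴ with hA
  set c : K → Fin d → Fin d → ℂ := fun k n m => star (u n) ⬝ᵥ (A k *ᵥ u m) with hc
  set T : K → ℝ := fun k => ∑ n, ∑ m,
    logMean (Real.exp (β * ω k / 2) * lam n) (Real.exp (-(β * ω k) / 2) * lam m) *
      Complex.normSq (c k n m) with hT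
  set P : K → ℝ := fun k => ∑ n, ∑ m, lam n * Complex.normSq (c k n m) with hP
  set Q : K → ℝ := fun k => ∑ n, ∑ m, lam m * Complex.normSq (c k n m) with hQ
  set R : K → ℝ := fun k => ∑ n, ∑ m,
    lam n * Complex.normSq (star (u n) ⬝ᵥ ((L k)ᴴ *ᵥ u m)) with hR
  have hkey1 : ∀ k, ((A k)ᴴ * tilted lam u (β * ω k) (A k)).trace = ((T k : ℝ) : ℂ) :=
    fun k => key1 lam u (β * ω k) (A k)
  have hZ : ((2 : ℂ)⁻¹ * ∑ k : K, ((Real.exp (-(β * ω k) / 2) : ℝ) : ℂ) *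
        (((A k)ᴴ * tilted lam u (β * ω k) (A k)).trace))
      = (((2:ℝ)⁻¹ * ∑ k : K, Real.exp (-(β * ω k) / 2) * T k : ℝ) : ℂ) := by
    simp only [hkey1]
    push_cast
    ring
  rw [hZ]
  have hTnn : ∀ k, 0 ≤ T k := by
    intro k
    refine Finset.sum_nonneg fun n _ => Finset.sum_nonneg fun m _ => ?_
    have h1 : 0 < logMean (Real.exp (β * ω k / 2) * lam n)
        (Real.exp (-(β * ω k) / 2) * lam m) :=
      logMean_pos (mul_pos (Real.exp_pos _) (hpos n)) (mul_pos (Real.exp_pos _) (hpos m))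
    exact mul_nonneg h1.le (Complex.normSq_nonneg _)
  refine ⟨Complex.ofReal_im _, ?_, ?_⟩
  · rw [Complex.ofReal_re]
    have : 0 ≤ ∑ k : K, Real.exp (-(β * ω k) / 2) * T k :=
      Finset.sum_nonneg fun k _ => mul_nonneg (Real.exp_pos _).le (hTnn k)
    positivity
  rw [Complex.ofReal_re]
  -- rewrite the RHS
  have hkey2 : ∀ M : Matrix (Fin d) (Fin d) ℂ, (ρ * (M * Mᴴ)).trace =
      ((∑ n, ∑ m, lam n * Complex.normSq (star (u n) ⬝ᵥ (M *ᵥ u m)) : ℝ) : ℂ) := by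
    intro M; rw [hρ]; exact key2 lam u horth M
  have hRe : ∀ k, ((ρ * ((L k)ᴴ * L k)).trace).re = R k := by
    intro k
    have h2 := hkey2 ((L k)ᴴ)
    rw [conjTranspose_conjTranspose] at h2
    rw [h2, Complex.ofReal_re]
  simp only [hRe]
  -- the per-k AM bound
  have hTk : ∀ k, Real.exp (-(β * ω k) / 2) * T k ≤
      (1/2) * (P k + Real.exp (-(β * ω k)) * Q k) := by
    intro k
    have hexpand : Real.exp (-(β * ω k) / 2) * T k = ∑ n, ∑ m,
        Real.exp (-(β * ω k) / 2) *
          (logMean (Real.exp (β * ω k / 2) * lam n) (Real.exp (-(β * ω k) / 2) * lam m) *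
            Complex.normSq (c k n m)) := by
      rw [hT]; simp only [Finset.mul_sum]
    have hexpand2 : (1/2) * (P k + Real.exp (-(β * ω k)) * Q k) = ∑ n, ∑ m,
        ((1/2) * (lam n * Complex.normSq (c k n m)) +
         (1/2) * (Real.exp (-(β * ω k)) * (lam m * Complex.normSq (c k n m)))) := by
      rw [hP, hQ]
      simp only [Finset.mul_sum, ← Finset.sum_add_distrib]
      exact Finset.sum_congr rfl fun n _ => Finset.sum_congr rfl fun m _ => by ring
    rw [hexpand, hexpand2]
    refine Finset.sum_le_sum fun n _ => Finset.sum_le_sum fun m _ => ?_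
    have hΦ := logMean_le_arith (mul_pos (Real.exp_pos (β * ω k / 2)) (hpos n))
      (mul_pos (Real.exp_pos (-(β * ω k) / 2)) (hpos m))
    have hs : (0:ℝ) ≤ Complex.normSq (c k n m) := Complex.normSq_nonneg _
    have h1 : Real.exp (-(β * ω k) / 2) * Real.exp (β * ω k / 2) = 1 := by
      rw [← Real.exp_add, show -(β * ω k) / 2 + β * ω k / 2 = 0 by ring, Real.exp_zero]
    have h2 : Real.exp (-(β * ω k) / 2) * Real.exp (-(β * ω k) / 2)
        = Real.exp (-(β * ω k)) := by
      rw [← Real.exp_add]; congr 1; ring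
    have hstep := mul_le_mul_of_nonneg_left (mul_le_mul_of_nonneg_right hΦ hs)
      (Real.exp_pos (-(β * ω k) / 2)).le
    refine le_trans hstep (le_of_eq ?_)
    linear_combination (lam n * Complex.normSq (c k n m) / 2) * h1 +
      (lam m * Complex.normSq (c k n m) / 2) * h2
  -- the involution symmetry
  have hPQ : ∀ k, Real.exp (-(β * ω (σ k))) * Q (σ k) = P k := by
    intro k
    have hAσ : A (σ k) = (-(Real.exp (-(β * ω k) / 2) : ℝ) : ℂ) • (A k)ᴴ := by
      rw [hA]
      simp only
      rw [hLσ k, conjTranspose_smul, conjTranspose_conjTranspose, Complex.star_def,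
        Complex.conj_ofReal, conjTranspose_sub, conjTranspose_mul, conjTranspose_mul,
        conjTranspose_conjTranspose, hX]
      rw [Matrix.smul_mul, Matrix.mul_smul, ← smul_sub]
      rw [neg_smul, ← smul_neg, neg_sub]
    have hcσ : ∀ n m, c (σ k) n m =
        (-(Real.exp (-(β * ω k) / 2) : ℝ) : ℂ) * star (c k m n) := by
      intro n m
      rw [hc]
      simp only
      rw [hAσ, Matrix.smul_mulVec, dotProduct_smul, smul_eq_mul, c_conjT]
    have hns : ∀ n m, Complex.normSq (c (σ k) n m) =
        (Real.exp (-(β * ω k) / 2) * Real.exp (-(β * ω k) / 2)) *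
          Complex.normSq (c k m n) := by
      intro n m
      rw [hcσ n m, Complex.normSq_mul, Complex.normSq_neg, Complex.normSq_ofReal,
        Complex.star_def, Complex.normSq_conj]
    have hee : Real.exp (-(β * ω (σ k))) *
        (Real.exp (-(β * ω k) / 2) * Real.exp (-(β * ω k) / 2)) = 1 := by
      rw [hω k, ← Real.exp_add, ← Real.exp_add,
        show -(β * -ω k) + (-(β * ω k) / 2 + -(β * ω k) / 2) = 0 by ring, Real.exp_zero]
    calc Real.exp (-(β * ω (σ k))) * Q (σ k)
        = ∑ n, ∑ m, (Real.exp (-(β * ω (σ k))) *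
            (Real.exp (-(β * ω k) / 2) * Real.exp (-(β * ω k) / 2))) *
            (lam m * Complex.normSq (c k m n)) := by
          rw [hQ]
          simp only [Finset.mul_sum]
          exact Finset.sum_congr rfl fun n _ => Finset.sum_congr rfl fun m _ => by
            rw [hns n m]; ring
      _ = ∑ n, ∑ m, lam m * Complex.normSq (c k m n) := by
          simp only [hee, one_mul]
      _ = P k := by
          rw [hP, Finset.sum_comm]
  -- the parallelogram bound
  have hP4 : ∀ k, P k ≤ 4 * R k := by
    intro k
    have hsplit : ∀ n m, c k n m = (star (u n) ⬝ᵥ (((L k)ᴴ * X) *ᵥ u m)) -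
        (star (u n) ⬝ᵥ ((X * (L k)ᴴ) *ᵥ u m)) := by
      intro n m
      rw [hc, hA]
      simp only
      rw [Matrix.sub_mulVec, dotProduct_sub]
    have hPM : (∑ n, ∑ m, lam n *
        Complex.normSq (star (u n) ⬝ᵥ (((L k)ᴴ * X) *ᵥ u m))) = R k := by
      have h2 := hkey2 ((L k)ᴴ * X)
      have h3 := hkey2 ((L k)ᴴ)
      have hmm : ((L k)ᴴ * X) * ((L k)ᴴ * X)ᴴ = (L k)ᴴ * ((L k)ᴴ)ᴴ := by
        rw [conjTranspose_mul, hX, conjTranspose_conjTranspose, Matrix.mul_assoc,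
          ← Matrix.mul_assoc X X (L k), hX2, Matrix.one_mul]
      rw [hmm] at h2
      have := h2.symm.trans h3
      exact_mod_cast Complex.ofReal_inj.mp this
    have hPN : (∑ n, ∑ m, lam n *
        Complex.normSq (star (u n) ⬝ᵥ ((X * (L k)ᴴ) *ᵥ u m))) = R k := by
      have h2 := hkey2 (X * (L k)ᴴ)
      have h3 := hkey2 ((L k)ᴴ)
      have hmm : (X * (L k)ᴴ) * (X * (L k)ᴴ)ᴴ = X * ((L k)ᴴ * ((L k)ᴴ)ᴴ) * X := by
        rw [conjTranspose_mul, hX, conjTranspose_conjTranspose]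
        simp only [Matrix.mul_assoc, conjTranspose_conjTranspose]
      have hXρX : X * (ρ * X) = ρ := by
        rw [← Matrix.mul_assoc, hcomm, Matrix.mul_assoc, hX2, Matrix.mul_one]
      have htrX : (ρ * (X * ((L k)ᴴ * ((L k)ᴴ)ᴴ) * X)).trace
          = (ρ * ((L k)ᴴ * ((L k)ᴴ)ᴴ)).trace := by
        rw [show ρ * (X * ((L k)ᴴ * ((L k)ᴴ)ᴴ) * X)
            = (ρ * X * ((L k)ᴴ * ((L k)ᴴ)ᴴ)) * X by simp only [Matrix.mul_assoc]]
        rw [Matrix.trace_mul_comm]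
        rw [show X * (ρ * X * ((L k)ᴴ * ((L k)ᴴ)ᴴ))
            = (X * (ρ * X)) * ((L k)ᴴ * ((L k)ᴴ)ᴴ) by simp only [Matrix.mul_assoc]]
        rw [hXρX]
      rw [hmm, htrX] at h2
      have := h2.symm.trans h3
      exact_mod_cast Complex.ofReal_inj.mp this
    have hb : P k ≤ ∑ n, ∑ m, (2 * (lam n *
          Complex.normSq (star (u n) ⬝ᵥ (((L k)ᴴ * X) *ᵥ u m))) +
          2 * (lam n * Complex.normSq (star (u n) ⬝ᵥ ((X * (L k)ᴴ) *ᵥ u m)))) := by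
      rw [hP]
      refine Finset.sum_le_sum fun n _ => Finset.sum_le_sum fun m _ => ?_
      rw [hsplit n m]
      have := normSq_sub_le (star (u n) ⬝ᵥ (((L k)ᴴ * X) *ᵥ u m))
        (star (u n) ⬝ᵥ ((X * (L k)ᴴ) *ᵥ u m))
      nlinarith [(hpos n).le, Complex.normSq_nonneg (star (u n) ⬝ᵥ (((L k)ᴴ * X) *ᵥ u m)),
        Complex.normSq_nonneg (star (u n) ⬝ᵥ ((X * (L k)ᴴ) *ᵥ u m))]
    have h4 : (∑ n, ∑ m, (2 * (lam n *
          Complex.normSq (star (u n) ⬝ᵥ (((L k)ᴴ * X) *ᵥ u m))) +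
          2 * (lam n * Complex.normSq (star (u n) ⬝ᵥ ((X * (L k)ᴴ) *ᵥ u m)))))
        = 4 * R k := by
      have hsplit2 : (∑ n : Fin d, ∑ m : Fin d, (2 * (lam n *
          Complex.normSq (star (u n) ⬝ᵥ (((L k)ᴴ * X) *ᵥ u m))) +
          2 * (lam n * Complex.normSq (star (u n) ⬝ᵥ ((X * (L k)ᴴ) *ᵥ u m)))))
          = 2 * (∑ n : Fin d, ∑ m : Fin d, lam n *
            Complex.normSq (star (u n) ⬝ᵥ (((L k)ᴴ * X) *ᵥ u m))) +
            2 * (∑ n : Fin d, ∑ m : Fin d, lam n *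
            Complex.normSq (star (u n) ⬝ᵥ ((X * (L k)ᴴ) *ᵥ u m))) := by
        simp only [Finset.sum_add_distrib, Finset.mul_sum]
      rw [hsplit2, hPM, hPN]; ring
    exact le_of_le_of_eq hb h4
  -- assemble
  have s1 : ∑ k, Real.exp (-(β * ω k) / 2) * T k ≤
      ∑ k, (1/2) * (P k + Real.exp (-(β * ω k)) * Q k) :=
    Finset.sum_le_sum fun k _ => hTk k
  have s3 : ∑ k, Real.exp (-(β * ω k)) * Q k = ∑ k, P k := by
    exact (Fintype.sum_bijective σ (Function.Involutive.bijective hσ)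
      (fun k => P k) (fun k => Real.exp (-(β * ω k)) * Q k)
      (fun k => (hPQ k).symm)).symm
  have s2 : ∑ k, (1/2) * (P k + Real.exp (-(β * ω k)) * Q k)
      = ∑ k, P k := by
    have h : ∑ k, (1/2) * (P k + Real.exp (-(β * ω k)) * Q k)
        = (1/2) * (∑ k, P k + ∑ k, Real.exp (-(β * ω k)) * Q k) := by
      rw [← Finset.sum_add_distrib, ← Finset.mul_sum]
    rw [h, s3]; ring
  have s4 : ∑ k, P k ≤ 4 * ∑ k, R k := by
    calc ∑ k, P k ≤ ∑ k, 4 * R k := Finset.sum_le_sum fun k _ => hP4 k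
    _ = 4 * ∑ k, R k := by rw [Finset.mul_sum]
  linarith
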